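/- Let A be a nonnegative self-adjoint operator on a Hilbert space H and ω > 0. For f ∈ H, if for every g ∈ H the function t ↦ ⟨e^{itA} f, g⟩ extends to an entire function F_g on ℂ with |F_g(z)| ≤ C_g e^{ω|Im z|} and F_g bounded on ℝ, then f ∈ PW_ω. -/

import Mathlib

/-!
Test the hypothesis against `g = 1_E f`, where `E = {b ≤ a ≤ N}` with `ω < b`. On `ℝ`, and hence
on all of `ℂ` by the identity theorem, `F_g` is the entire function `z ↦ ∫_E e^{iza} |f|² dμ`,
which is `O(e^{-b Im z})` in the upper half-plane. Hence `F_g(z) e^{-iωz}` is bounded on `ℂ`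
(by the exponential type `ω` below `ℝ`), so constant by Liouville, and it tends to `0` along
the positive imaginary axis. Therefore `∫_E |f|² dμ = F_g(0) = 0`, and countably many such `E`
exhaust `{a > ω}`.
-/

open MeasureTheory Complex Filter Metric Topology

lemma norm_cexp_I_mul_ofReal (z : ℂ) (r : ℝ) : ‖cexp (I * z * r)‖ = Real.exp (-(z.im * r)) := by
  simp [norm_exp, mul_re, mul_im]

lemma norm_cexp_I_mul_ofReal_le (z : ℂ) {r R : ℝ} (hr : |r| ≤ R) :
    ‖cexp (I * z * r)‖ ≤ Real.exp (|z.im| * R) := by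
  rw [norm_cexp_I_mul_ofReal]
  gcongr
  calc -(z.im * r) ≤ |z.im * r| := neg_le_abs _
    _ = |z.im| * |r| := abs_mul _ _
    _ ≤ |z.im| * R := by gcongr

lemma Differentiable.eq_of_eq_ofReal {F G : ℂ → ℂ} (hF : Differentiable ℂ F)
    (hG : Differentiable ℂ G) (h : ∀ t : ℝ, F t = G t) : F = G := by
  have h_real : Tendsto ((↑) : ℝ → ℂ) (𝓝[≠] 0) (𝓝[≠] 0) := by
    rw [tendsto_nhdsWithin_iff]
    refine ⟨tendsto_nhdsWithin_of_tendsto_nhds (by simpa using continuous_ofReal.tendsto 0), ?_⟩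
    exact eventually_nhdsWithin_iff.mpr (Eventually.of_forall fun t ht => ofReal_ne_zero.mpr ht)
  exact (hF.differentiableOn.analyticOnNhd isOpen_univ).eq_of_frequently_eq
    (hG.differentiableOn.analyticOnNhd isOpen_univ) (h_real.frequently (Frequently.of_forall h))

section Liouville

variable {F : ℂ → ℂ} {ω b C M : ℝ}

lemma norm_mul_cexp_I_mul_neg (w z : ℂ) (ω : ℝ) :
    ‖w * cexp (I * z * (-ω : ℝ))‖ = ‖w‖ * Real.exp (ω * z.im) := by
  rw [norm_mul, norm_cexp_I_mul_ofReal, neg_mul_eq_mul_neg, neg_neg, mul_comm z.im]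

lemma norm_mul_cexp_I_mul_neg_le (hb : ω < b) (hC : ∀ z, ‖F z‖ ≤ C * Real.exp (ω * |z.im|))
    (hM : ∀ z : ℂ, 0 ≤ z.im → ‖F z‖ ≤ M * Real.exp (-(b * z.im))) (z : ℂ) :
    ‖F z * cexp (I * z * (-ω : ℝ))‖ ≤ max C |M| := by
  rw [norm_mul_cexp_I_mul_neg]
  rcases le_total 0 z.im with hz | hz
  · calc ‖F z‖ * Real.exp (ω * z.im) ≤ M * Real.exp (-(b * z.im)) * Real.exp (ω * z.im) := by
          gcongr; exact hM z hz
      _ = M * Real.exp (-((b - ω) * z.im)) := by rw [mul_assoc, ← Real.exp_add]; ring_nf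
      _ ≤ |M| * 1 := by
          gcongr
          · exact le_abs_self M
          · exact Real.exp_le_one_iff.2 (by nlinarith)
      _ ≤ max C |M| := by simp
  · calc ‖F z‖ * Real.exp (ω * z.im) ≤ C * Real.exp (ω * |z.im|) * Real.exp (ω * z.im) := by
          gcongr; exact hC z
      _ = C := by rw [abs_of_nonpos hz, mul_assoc, ← Real.exp_add]; simp
      _ ≤ max C |M| := le_max_left _ _

theorem Differentiable.eq_zero_of_exponentialType_of_decay (hF : Differentiable ℂ F)
    (hb : ω < b) (hC : ∀ z, ‖F z‖ ≤ C * Real.exp (ω * |z.im|))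
    (hM : ∀ z : ℂ, 0 ≤ z.im → ‖F z‖ ≤ M * Real.exp (-(b * z.im))) : F = 0 := by
  set Ψ : ℂ → ℂ := fun z => F z * cexp (I * z * (-ω : ℝ))
  have hΨ_bdd : Bornology.IsBounded (Set.range Ψ) := by
    refine isBounded_iff_forall_norm_le.2 ⟨max C |M|, ?_⟩
    rintro _ ⟨z, rfl⟩
    exact norm_mul_cexp_I_mul_neg_le hb hC hM z
  have hΨ_const : ∀ z w, Ψ z = Ψ w :=
    (hF.mul (by fun_prop)).apply_eq_apply_of_bounded hΨ_bdd
  have hlim : Tendsto (fun t : ℝ => M * Real.exp (-((b - ω) * t))) atTop (𝓝 0) := by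
    simpa using (Real.tendsto_exp_neg_atTop_nhds_zero.comp
      (tendsto_id.const_mul_atTop (sub_pos.2 hb))).const_mul M
  have hΨ_zero (z : ℂ) : Ψ z = 0 := by
    refine norm_le_zero_iff.1 (ge_of_tendsto hlim ((eventually_ge_atTop 0).mono fun t ht => ?_))
    have hF_it := hM (I * t) (by simpa using ht)
    rw [hΨ_const z (I * t), norm_mul_cexp_I_mul_neg]
    calc ‖F (I * t)‖ * Real.exp (ω * (I * t).im)
        ≤ M * Real.exp (-(b * t)) * Real.exp (ω * t) := by simp at hF_it ⊢; gcongr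
      _ = M * Real.exp (-((b - ω) * t)) := by rw [mul_assoc, ← Real.exp_add]; ring_nf
  funext z
  simpa [Ψ, exp_ne_zero] using hΨ_zero z

end Liouville

section IntegralTransform

variable {X : Type*} {a : X → ℝ} {φ : X → ℂ}

lemma norm_cexp_mul_le_of_abs_le {R : ℝ} (hR : ∀ x, φ x ≠ 0 → |a x| ≤ R) (z : ℂ) (x : X) :
    ‖cexp (I * z * a x) * φ x‖ ≤ Real.exp (|z.im| * R) * ‖φ x‖ := by
  by_cases hx : φ x = 0
  · simp [hx]
  · rw [norm_mul]
    gcongr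
    exact norm_cexp_I_mul_ofReal_le z (hR x hx)

variable [MeasurableSpace X] {μ : Measure X}

theorem differentiable_integral_cexp_mul (ha : Measurable a) (hφ : Integrable φ μ) {R : ℝ}
    (hR : ∀ x, φ x ≠ 0 → |a x| ≤ R) :
    Differentiable ℂ fun z => ∫ x, cexp (I * z * a x) * φ x ∂μ := by
  intro z₀
  have hmeas (z : ℂ) : AEStronglyMeasurable (fun x => cexp (I * z * a x) * φ x) μ :=
    (by fun_prop : Measurable fun x => cexp (I * z * a x)).aestronglyMeasurable.mul hφ.1
  have h_bound : ∀ z ∈ ball z₀ 1, ∀ x, ‖I * a x * (cexp (I * z * a x) * φ x)‖ ≤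
      R * Real.exp ((|z₀.im| + 1) * R) * ‖φ x‖ := by
    intro z hz x
    by_cases hx : φ x = 0
    · simp [hx]
    have hR0 : 0 ≤ R := (abs_nonneg _).trans (hR x hx)
    have him : |z.im| ≤ |z₀.im| + 1 := by
      have := abs_im_le_norm (z - z₀)
      rw [sub_im, ← dist_eq] at this
      linarith [abs_sub_abs_le_abs_sub z.im z₀.im, mem_ball.1 hz]
    rw [norm_mul, norm_mul, norm_I, one_mul, norm_real, Real.norm_eq_abs, mul_assoc R]
    refine mul_le_mul (hR x hx) ((norm_cexp_mul_le_of_abs_le hR z x).trans ?_) (norm_nonneg _) hR0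
    gcongr
  refine (hasDerivAt_integral_of_dominated_loc_of_deriv_le
    (F' := fun z x => I * a x * (cexp (I * z * a x) * φ x)) (ball_mem_nhds z₀ one_pos)
    (Eventually.of_forall hmeas)
    ((hφ.norm.const_mul _).mono' (hmeas z₀) (ae_of_all _ (norm_cexp_mul_le_of_abs_le hR z₀)))
    ((by fun_prop : Measurable fun x => I * a x).aestronglyMeasurable.mul (hmeas z₀))
    (ae_of_all _ fun x z hz => h_bound z hz x) (hφ.norm.const_mul _)
    (ae_of_all _ fun x z _ => ?_)).2.differentiableAt
  exact ((((hasDerivAt_id z).const_mul I).mul_const (a x : ℂ)).cexp.mul_const (φ x)).congr_deriv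
    (by simp only [id]; ring)

theorem norm_integral_cexp_mul_le (hφ : Integrable φ μ) {b : ℝ} (hb : ∀ x, φ x ≠ 0 → b ≤ a x)
    {z : ℂ} (hz : 0 ≤ z.im) :
    ‖∫ x, cexp (I * z * a x) * φ x ∂μ‖ ≤ (∫ x, ‖φ x‖ ∂μ) * Real.exp (-(b * z.im)) := by
  rw [← integral_mul_const]
  refine norm_integral_le_of_norm_le (hφ.norm.mul_const _) (ae_of_all _ fun x => ?_)
  by_cases hx : φ x = 0
  · simp [hx]
  · rw [norm_mul, norm_cexp_I_mul_ofReal, mul_comm]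
    exact mul_le_mul_of_nonneg_left (Real.exp_le_exp.2 (by nlinarith [hb x hx])) (norm_nonneg _)

end IntegralTransform

lemma exists_nat_add_one_div_le_and_le {ω r : ℝ} (h : ω < r) :
    ∃ n : ℕ, ω + 1 / ((n : ℝ) + 1) ≤ r ∧ r ≤ n := by
  obtain ⟨n₁, hn₁⟩ := exists_nat_ge r
  obtain ⟨n₂, hn₂⟩ := exists_nat_one_div_lt (sub_pos.2 h)
  refine ⟨n₁ + n₂, ?_, hn₁.trans (by exact_mod_cast Nat.le_add_right n₁ n₂)⟩
  linarith [Nat.one_div_le_one_div (α := ℝ) (Nat.le_add_left n₂ n₁)]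

theorem ae_eq_zero_on_of_exponentialType {X : Type*} [MeasurableSpace X] {μ : Measure X}
    {a : X → ℝ} (ha : Measurable a) {ω b N : ℝ} (hb : ω < b) {E : Set X} (hE : MeasurableSet E)
    (hEa : ∀ x ∈ E, b ≤ a x ∧ a x ≤ N) {f : X → ℂ} (hf : MemLp f 2 μ) {F : ℂ → ℂ} {C : ℝ}
    (hF : Differentiable ℂ F)
    (hFt : ∀ t : ℝ, F t = ∫ x, cexp (I * t * a x) * f x * starRingEnd ℂ (E.indicator f x) ∂μ)
    (hC : ∀ z, ‖F z‖ ≤ C * Real.exp (ω * |z.im|)) :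
    ∀ᵐ x ∂μ, x ∈ E → f x = 0 := by
  set ψ : X → ℝ := E.indicator fun x => ‖f x‖ ^ 2
  have hψ : Integrable ψ μ := ((memLp_two_iff_integrable_sq_norm hf.1).1 hf).indicator hE
  have hψ_supp (x : X) (hx : (ψ x : ℂ) ≠ 0) : x ∈ E := by
    by_contra hxE
    simp [ψ, hxE] at hx
  have hFψ (t : ℝ) : F t = ∫ x, cexp (I * t * a x) * (ψ x : ℂ) ∂μ := by
    rw [hFt]
    congr 1 with x
    by_cases hx : x ∈ E <;> simp [ψ, hx, mul_assoc, mul_conj']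
  have hF_eq := hF.eq_of_eq_ofReal (differentiable_integral_cexp_mul ha hψ.ofReal
    fun x hx => abs_le_max_abs_abs (hEa x (hψ_supp x hx)).1 (hEa x (hψ_supp x hx)).2) hFψ
  have hF_zero : F = 0 := hF.eq_zero_of_exponentialType_of_decay hb hC fun z hz => by
    rw [hF_eq]
    exact norm_integral_cexp_mul_le hψ.ofReal (fun x hx => (hEa x (hψ_supp x hx)).1) hz
  have hψ_int : ∫ x, ψ x ∂μ = 0 := by
    rw [← ofReal_eq_zero, ← integral_complex_ofReal]
    simpa [hF_zero] using (hFψ 0).symm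
  have hψ_ae : ψ =ᵐ[μ] 0 := (integral_eq_zero_iff_of_nonneg
    (fun x => Set.indicator_nonneg (fun _ _ => by positivity) x) hψ).1 hψ_int
  filter_upwards [hψ_ae] with x hx hxE
  simpa [ψ, hxE] using hx

/-- `A` is modelled, via the spectral theorem, as multiplication by `a` on `L²(μ)`; then
`e^{itA} f = e^{ita} f` and `PW_ω` consists of the `f` vanishing a.e. on `{a > ω}`. -/
theorem stmt16_general {X : Type*} [MeasurableSpace X] (μ : Measure X)
    (a : X → ℝ) (ha_meas : Measurable a)
    (ω : ℝ)
    (f : X → ℂ) (hf : MemLp f 2 μ)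
    (hext : ∀ g : X → ℂ, MemLp g 2 μ →
      ∃ (F : ℂ → ℂ) (C B : ℝ), Differentiable ℂ F ∧
        (∀ t : ℝ, F t =
          ∫ x, Complex.exp (Complex.I * t * (a x : ℂ)) * f x * (starRingEnd ℂ) (g x) ∂μ) ∧
        (∀ z : ℂ, ‖F z‖ ≤ C * Real.exp (ω * |z.im|)) ∧
        (∀ t : ℝ, ‖F t‖ ≤ B)) :
    ∀ᵐ x ∂μ, ω < a x → f x = 0 := by
  set E : ℕ → Set X := fun n => {x | ω + 1 / ((n : ℝ) + 1) ≤ a x ∧ a x ≤ n}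
  have hE_meas (n : ℕ) : MeasurableSet (E n) :=
    (measurableSet_le measurable_const ha_meas).inter (measurableSet_le ha_meas measurable_const)
  have hf_E (n : ℕ) : ∀ᵐ x ∂μ, x ∈ E n → f x = 0 := by
    obtain ⟨F, C, -, hF, hFt, hC, -⟩ := hext _ (hf.indicator (hE_meas n))
    exact ae_eq_zero_on_of_exponentialType ha_meas (lt_add_of_pos_right ω (by positivity))
      (hE_meas n) (fun x hx => hx) hf hF hFt hC
  filter_upwards [ae_all_iff.2 hf_E] with x hx hωx
  obtain ⟨n, hn⟩ := exists_nat_add_one_div_le_and_le hωx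
  exact hx n hn

/-- Abstract Paley-Wiener theorem, converse part. With the nonnegative self-adjoint operator
`A` modeled as multiplication by a nonnegative measurable `a` on `L²(X,μ)`: if for every
`g ∈ L²` the function `t ↦ ⟨e^{itA} f, g⟩` extends to an entire function `F_g` with
`|F_g(z)| ≤ C_g e^{ω |Im z|}` which is bounded on `ℝ`, then `f ∈ PW_ω`, i.e. `f` vanishes
a.e. on the set where `a > ω`. -/
theorem stmt16 {X : Type*} [MeasurableSpace X] (μ : Measure X)
    (a : X → ℝ) (ha_meas : Measurable a) (ha_nonneg : ∀ x, 0 ≤ a x)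
    (ω : ℝ) (hω : 0 < ω)
    (f : X → ℂ) (hf : MemLp f 2 μ)
    (hext : ∀ g : X → ℂ, MemLp g 2 μ →
      ∃ (F : ℂ → ℂ) (C B : ℝ), Differentiable ℂ F ∧
        (∀ t : ℝ, F t =
          ∫ x, Complex.exp (Complex.I * t * (a x : ℂ)) * f x * (starRingEnd ℂ) (g x) ∂μ) ∧
        (∀ z : ℂ, ‖F z‖ ≤ C * Real.exp (ω * |z.im|)) ∧
        (∀ t : ℝ, ‖F t‖ ≤ B)) :
    ∀ᵐ x ∂μ, ω < a x → f x = 0 :=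
  stmt16_general μ a ha_meas ω f hf hext
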